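/- arXiv:1804.03587 — 4 statements merged into one kernel-verified Lean document; each statement's English description precedes it below -/
import Mathlib

section
/- Stanley's transfer map φ, defined by φ(x)_p = x_p − max{x_q : q covered by p} (with the max over the empty set taken to be 0, using the convention that q ⋖ p means q is covered by p), maps the order polytope O(P,1) bijectively onto the chain polytope C(P,1); consequently O(P,1) and C(P,1) are Ehrhart-equivalent. -/
/-- The dilated order polytope `O(P,r)`. -/
def orderPolytope (P : Type*) [PartialOrder P] (r : ℝ) : Set (P → ℝ) :=
  {x | (∀ p, 0 ≤ x p ∧ x p ≤ r) ∧ ∀ p q : P, p ≤ q → x p ≤ x q}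

/-- The dilated chain polytope `C(P,r)`. -/
def chainPolytope (P : Type*) [PartialOrder P] (r : ℝ) : Set (P → ℝ) :=
  {x | (∀ p, 0 ≤ x p) ∧
    ∀ C : Finset P, IsChain (· ≤ ·) (C : Set P) → ∑ p ∈ C, x p ≤ r}

/-- `x` is a lattice (integral) point. -/
def isLatticePoint {P : Type*} (x : P → ℝ) : Prop := ∀ p, ∃ m : ℤ, x p = m

/-- Characteristic function of a finite subset. -/
def chi {P : Type*} [DecidableEq P] (A : Finset P) : P → ℝ :=
  fun p => if p ∈ A then 1 else 0


/-- Stanley's transfer map: `φ(x)_p = x_p - max {x_q : q ⋖ p}` (empty max is `0`). -/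
noncomputable def transfer {P : Type*} [PartialOrder P] (x : P → ℝ) : P → ℝ :=
  fun p => x p - ⨆ q : {q : P // q ⋖ p}, x q.1

/-! For monotone `x ≥ 0` the transfer map `φ` is nonnegative, and it is inverted by
`ψ(y)_p = max {∑_{q ∈ C} y_q : C a chain with greatest element p}`. For `y ≥ 0` this maximum
satisfies the recursion `ψ(y)_p = y_p + max_{q ⋖ p} ψ(y)_q`, which is exactly `φ(ψ y) = y`, and
induction over the finite poset turns it into `ψ(φ x) = x`. The latter bounds `∑_{q ∈ C} φ(x)_q`
by `x_m ≤ r` for a chain `C` with top `m`, while `ψ(y)_p ≤ r` because `ψ(y)_p` is a chain sum.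
Both maxima are attained, so `φ` and `ψ` preserve integrality, and restricting the bijection to
lattice points of the `r`-th dilates gives the Ehrhart equivalence. -/

section Transfer

open Finset

variable {P : Type*} [PartialOrder P]

noncomputable def coverSup (x : P → ℝ) (p : P) : ℝ := ⨆ q : {q : P // q ⋖ p}, x q.1

lemma transfer_apply (x : P → ℝ) (p : P) : transfer x p = x p - coverSup x p := rfl

section CoverSup

variable {x x' : P → ℝ} {p q : P}

lemma coverSup_le {a : ℝ} (ha : 0 ≤ a) (h : ∀ q, q ⋖ p → x q ≤ a) : coverSup x p ≤ a :=
  Real.iSup_le (fun q => h q.1 q.2) ha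

lemma coverSup_nonneg (hx : 0 ≤ x) (p : P) : 0 ≤ coverSup x p :=
  Real.iSup_nonneg fun q => hx q.1

lemma coverSup_congr (h : ∀ q < p, x q = x' q) : coverSup x p = coverSup x' p :=
  iSup_congr fun q => h q.1 q.2.lt

lemma transfer_nonneg (hx : Monotone x) (hx0 : 0 ≤ x) : 0 ≤ transfer x := fun p =>
  sub_nonneg.2 (coverSup_le (hx0 p) fun _ hq => hx hq.le)

variable [Finite P]

lemma le_coverSup (h : q ⋖ p) : x q ≤ coverSup x p :=
  le_ciSup (f := fun q : {q : P // q ⋖ p} => x q.1) (Set.finite_range _).bddAbove ⟨q, h⟩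

lemma coverSup_eq_zero_or_exists (x : P → ℝ) (p : P) :
    coverSup x p = 0 ∨ ∃ q, q ⋖ p ∧ coverSup x p = x q := by
  rcases isEmpty_or_nonempty {q : P // q ⋖ p} with h | h
  · exact Or.inl (Real.iSup_of_isEmpty _)
  · obtain ⟨q, hq⟩ := Finite.exists_max fun q : {q : P // q ⋖ p} => x q.1
    exact Or.inr ⟨q.1, q.2, le_antisymm (ciSup_le hq) (le_coverSup q.2)⟩

lemma isLatticePoint_transfer (hx : isLatticePoint x) : isLatticePoint (transfer x) := by
  intro p
  obtain ⟨a, ha⟩ := hx p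
  rcases coverSup_eq_zero_or_exists x p with h | ⟨q, -, h⟩
  · exact ⟨a, by rw [transfer_apply, h, ha, sub_zero]⟩
  · obtain ⟨b, hb⟩ := hx q
    exact ⟨a - b, by rw [transfer_apply, h, ha, hb, Int.cast_sub]⟩

end CoverSup

section Chains

variable {p q : P} {C : Finset P}

lemma IsChain.exists_isGreatest (hC : IsChain (· ≤ ·) (C : Set P)) (hne : C.Nonempty) :
    ∃ m, IsGreatest (C : Set P) m := by
  obtain ⟨m, hm, hmax⟩ := C.exists_maximal hne
  refine ⟨m, hm, fun q hq => ?_⟩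
  rcases eq_or_ne q m with rfl | hqm
  · exact le_rfl
  · exact (hC hq hm hqm).elim id fun hmq => hmax hq hmq

lemma isChain_isGreatest_insert_of_lt [DecidableEq P] (hC : IsChain (· ≤ ·) (C : Set P))
    (hq : IsGreatest (C : Set P) q) (hqp : q < p) :
    IsChain (· ≤ ·) ((insert p C : Finset P) : Set P) ∧
      IsGreatest ((insert p C : Finset P) : Set P) p := by
  have hle : ∀ c ∈ (C : Set P), c ≤ p := fun c hc => (hq.2 hc).trans hqp.le
  rw [coe_insert]
  exact ⟨hC.insert fun c hc _ => Or.inr (hle c hc),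
    Set.mem_insert p _, Set.forall_mem_insert.2 ⟨le_rfl, hle⟩⟩

lemma eq_singleton_or_exists_isGreatest_erase [DecidableEq P]
    (hC : IsChain (· ≤ ·) (C : Set P)) (hp : IsGreatest (C : Set P) p) :
    C = {p} ∨ ∃ m < p, IsGreatest ((C.erase p : Finset P) : Set P) m := by
  rcases (C.erase p).eq_empty_or_nonempty with h | h
  · exact Or.inl (erase_eq_empty_iff C p |>.1 h |>.resolve_left (ne_empty_of_mem hp.1))
  obtain ⟨m, hm⟩ := (hC.mono (by simp)).exists_isGreatest h
  have hmC : m ∈ erase C p := hm.1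
  exact Or.inr ⟨m, (hp.2 (mem_of_mem_erase hmC)).lt_of_ne (ne_of_mem_erase hmC), hm⟩

end Chains

section InvTransfer

variable [Fintype P] {x y : P → ℝ} {p q : P} {C : Finset P}

open Classical in
noncomputable def chainsWithTop (p : P) : Finset (Finset P) :=
  {C | IsChain (· ≤ ·) (C : Set P) ∧ IsGreatest (C : Set P) p}

lemma mem_chainsWithTop :
    C ∈ chainsWithTop p ↔ IsChain (· ≤ ·) (C : Set P) ∧ IsGreatest (C : Set P) p := by
  simp [chainsWithTop]

lemma singleton_mem_chainsWithTop (p : P) : {p} ∈ chainsWithTop p :=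
  mem_chainsWithTop.2 ⟨Set.Subsingleton.isChain (by simp), by simp⟩

noncomputable def invTransfer (y : P → ℝ) (p : P) : ℝ :=
  (chainsWithTop p).sup' ⟨{p}, singleton_mem_chainsWithTop p⟩ fun C => ∑ q ∈ C, y q

lemma sum_le_invTransfer (hC : C ∈ chainsWithTop p) : ∑ q ∈ C, y q ≤ invTransfer y p :=
  le_sup' (fun C => ∑ q ∈ C, y q) hC

lemma invTransfer_le {a : ℝ} (h : ∀ C ∈ chainsWithTop p, ∑ q ∈ C, y q ≤ a) :
    invTransfer y p ≤ a :=
  sup'_le _ _ h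

lemma exists_sum_eq_invTransfer (y : P → ℝ) (p : P) :
    ∃ C ∈ chainsWithTop p, ∑ q ∈ C, y q = invTransfer y p := by
  obtain ⟨C, hC, h⟩ := exists_mem_eq_sup' ⟨{p}, singleton_mem_chainsWithTop p⟩
    fun C : Finset P => ∑ q ∈ C, y q
  exact ⟨C, hC, h.symm⟩

lemma le_invTransfer_self (y : P → ℝ) (p : P) : y p ≤ invTransfer y p := by
  simpa using sum_le_invTransfer (y := y) (singleton_mem_chainsWithTop p)

lemma add_invTransfer_le (hqp : q < p) : y p + invTransfer y q ≤ invTransfer y p := by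
  classical
  obtain ⟨C, hC, hsum⟩ := exists_sum_eq_invTransfer y q
  obtain ⟨hchain, hq⟩ := mem_chainsWithTop.1 hC
  have hpC : p ∉ C := fun hp => (hq.2 hp).not_gt hqp
  rw [← hsum, ← sum_insert hpC]
  exact sum_le_invTransfer (mem_chainsWithTop.2 (isChain_isGreatest_insert_of_lt hchain hq hqp))

lemma invTransfer_nonneg (hy : 0 ≤ y) : 0 ≤ invTransfer y := fun p =>
  (hy p).trans (le_invTransfer_self y p)

lemma invTransfer_mono (hy : 0 ≤ y) : Monotone (invTransfer y) := by
  intro q p hqp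
  rcases hqp.eq_or_lt with rfl | hlt
  · exact le_rfl
  · exact (le_add_of_nonneg_left (hy p)).trans (add_invTransfer_le hlt)

lemma invTransfer_eq_add_coverSup (hy : 0 ≤ y) (p : P) :
    invTransfer y p = y p + coverSup (invTransfer y) p := by
  classical
  refine le_antisymm ?_ ?_
  · obtain ⟨C, hC, hsum⟩ := exists_sum_eq_invTransfer y p
    obtain ⟨hchain, hp⟩ := mem_chainsWithTop.1 hC
    rw [← hsum]
    rcases eq_singleton_or_exists_isGreatest_erase hchain hp with rfl | ⟨m, hmp, hm⟩
    · simpa using coverSup_nonneg (invTransfer_nonneg hy) p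
    obtain ⟨q, hmq, hqp⟩ := exists_le_covBy_of_lt hmp
    have hrest : ∑ c ∈ C.erase p, y c ≤ invTransfer y m :=
      sum_le_invTransfer (mem_chainsWithTop.2 ⟨hchain.mono (by simp), hm⟩)
    rw [← add_sum_erase C y hp.1]
    linarith [invTransfer_mono hy hmq, le_coverSup (x := invTransfer y) hqp]
  · have hcov : coverSup (invTransfer y) p ≤ invTransfer y p - y p :=
      coverSup_le (sub_nonneg.2 (le_invTransfer_self y p)) fun q hq => by
        linarith [add_invTransfer_le (y := y) hq.lt]
    linarith

lemma transfer_invTransfer (hy : 0 ≤ y) : transfer (invTransfer y) = y := by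
  ext p
  rw [transfer_apply]
  linarith [invTransfer_eq_add_coverSup hy p]

lemma invTransfer_transfer (hx : Monotone x) (hx0 : 0 ≤ x) : invTransfer (transfer x) = x := by
  ext p
  induction p using WellFoundedLT.induction with
  | _ p ih =>
    rw [invTransfer_eq_add_coverSup (transfer_nonneg hx hx0), coverSup_congr ih, transfer_apply]
    ring

lemma isLatticePoint_invTransfer (hy : isLatticePoint y) : isLatticePoint (invTransfer y) := by
  intro p
  obtain ⟨C, -, hsum⟩ := exists_sum_eq_invTransfer y p
  choose m hm using hy
  exact ⟨∑ q ∈ C, m q, by rw [← hsum, Int.cast_sum]; exact sum_congr rfl fun q _ => hm q⟩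

end InvTransfer

section Polytopes

variable [Fintype P] {r : ℝ}

lemma transfer_mem_chainPolytope (hr : 0 ≤ r) {x : P → ℝ} (hx : x ∈ orderPolytope P r) :
    transfer x ∈ chainPolytope P r := by
  obtain ⟨hbound, hmono⟩ := hx
  have hx0 : 0 ≤ x := fun p => (hbound p).1
  refine ⟨transfer_nonneg hmono hx0, fun C hC => ?_⟩
  rcases C.eq_empty_or_nonempty with rfl | hne
  · simpa using hr
  obtain ⟨m, hm⟩ := hC.exists_isGreatest hne
  calc ∑ p ∈ C, transfer x p ≤ invTransfer (transfer x) m :=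
        sum_le_invTransfer (mem_chainsWithTop.2 ⟨hC, hm⟩)
    _ = x m := by rw [invTransfer_transfer hmono hx0]
    _ ≤ r := (hbound m).2

lemma invTransfer_mem_orderPolytope {y : P → ℝ} (hy : y ∈ chainPolytope P r) :
    invTransfer y ∈ orderPolytope P r := by
  obtain ⟨hy0, hchain⟩ := hy
  exact ⟨fun p => ⟨invTransfer_nonneg hy0 p,
      invTransfer_le fun C hC => hchain C (mem_chainsWithTop.1 hC).1⟩,
    invTransfer_mono hy0⟩

lemma invOn_invTransfer_transfer :
    Set.InvOn invTransfer transfer (orderPolytope P r) (chainPolytope P r) :=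
  ⟨fun _ hx => invTransfer_transfer hx.2 fun p => (hx.1 p).1,
    fun _ hy => transfer_invTransfer hy.1⟩

lemma transfer_bijOn (hr : 0 ≤ r) :
    Set.BijOn transfer (orderPolytope P r) (chainPolytope P r) :=
  invOn_invTransfer_transfer.bijOn (fun _ => transfer_mem_chainPolytope hr)
    fun _ => invTransfer_mem_orderPolytope

lemma transfer_bijOn_latticePoints (hr : 0 ≤ r) :
    Set.BijOn transfer {x ∈ orderPolytope P r | isLatticePoint x}
      {y ∈ chainPolytope P r | isLatticePoint y} :=
  (invOn_invTransfer_transfer.mono (fun _ hx => hx.1) fun _ hy => hy.1).bijOn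
    (fun _ hx => ⟨transfer_mem_chainPolytope hr hx.1, isLatticePoint_transfer hx.2⟩)
    fun _ hy => ⟨invTransfer_mem_orderPolytope hy.1, isLatticePoint_invTransfer hy.2⟩

end Polytopes

end Transfer

/-- the transfer map is a bijection from `O(P,1)` onto `C(P,1)`;
consequently the two polytopes are Ehrhart equivalent. -/
theorem transfer_map_bijOn (P : Type*) [PartialOrder P] [Fintype P] :
    Set.BijOn (transfer (P := P)) (orderPolytope P 1) (chainPolytope P 1) ∧
    ∀ r : ℕ, 0 < r →
      {x ∈ orderPolytope P (r : ℝ) | isLatticePoint x}.ncard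
        = {x ∈ chainPolytope P (r : ℝ) | isLatticePoint x}.ncard :=
  ⟨transfer_bijOn zero_le_one, fun r _ => (transfer_bijOn_latticePoints r.cast_nonneg).ncard_eq⟩
end

section
/- For the poset P_{k,n}, the set of lattice points of the dilated chain polytope C(P_{k,n}, r) equals the r-fold Minkowski sum of the set of lattice points of C(P_{k,n}, 1). -/
/-- The poset `P_{k,n}`: elements `p_{i,j}` with `1 ≤ i ≤ k`, `k+1 ≤ j ≤ n`. -/
def Pkn (k n : ℕ) : Type :=
  {p : Fin (k + 1) × Fin (n + 1) // 1 ≤ p.1.1 ∧ k + 1 ≤ p.2.1}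

instance (k n : ℕ) : DecidableEq (Pkn k n) := by unfold Pkn; infer_instance
instance (k n : ℕ) : Fintype (Pkn k n) := by unfold Pkn; infer_instance

/-- The order generated by the covering relations `p_{i+1,j} ⋖ p_{i,j}` and
`p_{i,j+1} ⋖ p_{i,j}`: `p ≤ q` iff the indices of `q` are componentwise ≤ those of `p`. -/
instance (k n : ℕ) : PartialOrder (Pkn k n) where
  le p q := q.1.1.1 ≤ p.1.1.1 ∧ q.1.2.1 ≤ p.1.2.1
  le_refl p := ⟨le_refl _, le_refl _⟩
  le_trans a b c h1 h2 := ⟨le_trans h2.1 h1.1, le_trans h2.2 h1.2⟩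
  le_antisymm a b h1 h2 :=
    Subtype.ext (Prod.ext (Fin.ext (Nat.le_antisymm h2.1 h1.1))
      (Fin.ext (Nat.le_antisymm h2.2 h1.2)))

/-- The element `p_{i,j}` of `P_{k,n}`. -/
def Pkn.mk' (k n i j : ℕ) (hi : 1 ≤ i) (hik : i ≤ k) (hj : k + 1 ≤ j) (hjn : j ≤ n) :
    Pkn k n :=
  ⟨(⟨i, by omega⟩, ⟨j, by omega⟩), hi, hj⟩

/-- The first index `i` of an element `p_{i,j}` of `P_{k,n}`. -/
def Pkn.i {k n : ℕ} (p : Pkn k n) : ℕ := p.1.1.1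
/-- The second index `j` of an element `p_{i,j}` of `P_{k,n}`. -/
def Pkn.j {k n : ℕ} (p : Pkn k n) : ℕ := p.1.2.1


open Finset in
theorem antichain_decomp {P : Type*} [Fintype P] [DecidableEq P] [PartialOrder P]
    (r : ℕ) (g : P → ℕ)
    (hg : ∀ C : Finset P, IsChain (· ≤ ·) (C : Set P) → ∑ p ∈ C, g p ≤ r) :
    ∃ A : Fin r → Finset P, (∀ i, IsAntichain (· ≤ ·) ((A i : Set P))) ∧
      ∀ p, g p = ∑ i : Fin r, (if p ∈ A i then 1 else 0) := by
  classical
  set S : P → Finset (Finset P) := fun p =>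
    univ.filter (fun C : Finset P => IsChain (· ≤ ·) (C : Set P) ∧ ∀ a ∈ C, a ≤ p)
    with hS
  set ht : P → ℕ := fun p => (S p).sup (fun C => ∑ q ∈ C, g q) with hht
  have hSne : ∀ p, (S p).Nonempty := fun p => ⟨∅, by simp [hS]⟩
  have h_le_r : ∀ p, ht p ≤ r := fun p =>
    Finset.sup_le fun C hC => hg C (mem_filter.mp hC).2.1
  have h_self : ∀ p, g p ≤ ht p := by
    intro p
    have hmem : ({p} : Finset P) ∈ S p := by
      simp [hS, IsChain, Set.Pairwise]
    have := Finset.le_sup (f := fun C => ∑ q ∈ C, g q) hmem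
    simpa using this
  have h_step : ∀ p q : P, q < p → ht q + g p ≤ ht p := by
    intro p q hqp
    obtain ⟨C, hC, hCeq⟩ := Finset.exists_mem_eq_sup (S q) (hSne q)
      (fun C => ∑ a ∈ C, g a)
    obtain ⟨-, hCchain, hCsub⟩ := mem_filter.mp hC
    have hpC : p ∉ C := fun h => absurd (hCsub p h) (not_le_of_gt hqp)
    have hchain' : IsChain (· ≤ ·) ((insert p C : Finset P) : Set P) := by
      rw [coe_insert]
      exact hCchain.insert (fun b hb _ => Or.inr (le_of_lt (lt_of_le_of_lt
        (hCsub b hb) hqp)))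
    have hsub' : ∀ a ∈ (insert p C : Finset P), a ≤ p := by
      intro a ha
      rcases mem_insert.mp ha with h | h
      · exact le_of_eq h
      · exact le_trans (hCsub a h) (le_of_lt hqp)
    have hmem' : (insert p C : Finset P) ∈ S p := by
      simp only [hS, mem_filter, mem_univ, true_and]
      exact ⟨hchain', hsub'⟩
    have := Finset.le_sup (f := fun C => ∑ q ∈ C, g q) hmem'
    simp only [Finset.sum_insert hpC] at this
    have e1 : ht q = ∑ a ∈ C, g a := hCeq
    have e2 : g p + ∑ a ∈ C, g a ≤ ht p := this
    omega
  refine ⟨fun i => univ.filter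
    (fun p => 0 < g p ∧ ht p - g p < i.1 + 1 ∧ i.1 + 1 ≤ ht p), ?_, ?_⟩
  · intro i p hp q hq hne hle
    simp only [coe_filter, Set.mem_setOf_eq, mem_univ, true_and] at hp hq
    have hlt : p < q := lt_of_le_of_ne hle hne
    have := h_step q p hlt
    omega
  · intro p
    have heq : ∀ i : Fin r, (if p ∈ univ.filter
        (fun p => 0 < g p ∧ ht p - g p < i.1 + 1 ∧ i.1 + 1 ≤ ht p) then 1 else 0) =
        (if 0 < g p ∧ ht p - g p < i.1 + 1 ∧ i.1 + 1 ≤ ht p then 1 else 0) := by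
      intro i; simp [mem_filter]
    simp only [heq]
    rw [Fin.sum_univ_eq_sum_range
      (fun i => if 0 < g p ∧ ht p - g p < i + 1 ∧ i + 1 ≤ ht p then 1 else 0)]
    rw [← Finset.card_filter]
    by_cases hgp : 0 < g p
    · have h1 : (range r).filter
          (fun i => 0 < g p ∧ ht p - g p < i + 1 ∧ i + 1 ≤ ht p) =
          Finset.Ico (ht p - g p) (ht p) := by
        ext i
        simp only [mem_filter, mem_range, mem_Ico]
        have := h_le_r p
        have := h_self p
        omega
      rw [h1, Nat.card_Ico]
      have := h_self p
      omega
    · have h1 : (range r).filter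
          (fun i => 0 < g p ∧ ht p - g p < i + 1 ∧ i + 1 ≤ ht p) = ∅ := by
        ext i; simp only [mem_filter, mem_range, notMem_empty, iff_false]
        intro h; exact absurd h.2.1 (by omega)
      rw [h1]; simp; omega

open Finset in
theorem chi_mem_chainPolytope {P : Type*} [DecidableEq P] [PartialOrder P]
    (A : Finset P) (hA : IsAntichain (· ≤ ·) (A : Set P)) :
    chi A ∈ chainPolytope P 1 := by
  constructor
  · intro p; unfold chi; split <;> norm_num
  · intro C hC
    unfold chi
    rw [Finset.sum_boole]
    norm_cast
    rw [Finset.card_filter_le_iff]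
    intro s hs h2
    by_contra hcon
    push_neg at hcon
    obtain ⟨a, ha, b, hb, hab⟩ := Finset.one_lt_card.mp h2
    rcases hC (hs ha) (hs hb) hab with h | h
    · exact hA (hcon a ha) (hcon b hb) hab h
    · exact hA (hcon b hb) (hcon a ha) (Ne.symm hab) h


/-- lattice points of `C(P_{k,n}, r)` are the `r`-fold Minkowski sums of
lattice points of `C(P_{k,n}, 1)`. -/
theorem chain_polytope_Pkn_minkowski (k n : ℕ) (hk : 1 ≤ k) (hkn : k ≤ n - 1)
    (r : ℕ) (hr : 0 < r) :
    {x ∈ chainPolytope (Pkn k n) (r : ℝ) | isLatticePoint x}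
      = {x | ∃ f : Fin r → (Pkn k n → ℝ),
          (∀ i, f i ∈ chainPolytope (Pkn k n) 1 ∧ isLatticePoint (f i)) ∧
          x = ∑ i, f i} := by
  ext x
  simp only [Set.mem_setOf_eq, Set.mem_sep_iff]
  constructor
  · rintro ⟨hx, hlat⟩
    set g : Pkn k n → ℕ := fun p => (Classical.choose (hlat p)).toNat with hgdef
    have hxg : ∀ p, x p = (g p : ℝ) := by
      intro p
      have hspec := Classical.choose_spec (hlat p)
      have h0 : (0:ℝ) ≤ x p := hx.1 p
      have hm : 0 ≤ Classical.choose (hlat p) := by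
        by_contra h
        push_neg at h
        rw [hspec] at h0
        have : ((Classical.choose (hlat p) : ℤ) : ℝ) < 0 := by exact_mod_cast h
        linarith
      rw [hspec, hgdef]
      exact_mod_cast (Int.toNat_of_nonneg hm).symm
    have hg : ∀ C : Finset (Pkn k n), IsChain (· ≤ ·) (C : Set (Pkn k n)) →
        ∑ p ∈ C, g p ≤ r := by
      intro C hC
      have h2 : ((∑ p ∈ C, g p : ℕ) : ℝ) ≤ r := by
        push_cast
        rw [← Finset.sum_congr rfl fun p _ => hxg p]
        exact hx.2 C hC
      exact_mod_cast h2
    obtain ⟨A, hA1, hA2⟩ := antichain_decomp r g hg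
    refine ⟨fun i => chi (A i), fun i => ⟨chi_mem_chainPolytope _ (hA1 i), ?_⟩, ?_⟩
    · intro p
      by_cases h : p ∈ A i
      · exact ⟨1, by simp [chi, h]⟩
      · exact ⟨0, by simp [chi, h]⟩
    · funext p
      rw [Finset.sum_apply, hxg p, hA2 p]
      push_cast
      refine Finset.sum_congr rfl fun i _ => ?_
      unfold chi; split <;> simp
  · rintro ⟨f, hf, rfl⟩
    refine ⟨⟨?_, ?_⟩, ?_⟩
    · intro p
      rw [Finset.sum_apply]
      exact Finset.sum_nonneg fun i _ => (hf i).1.1 p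
    · intro C hC
      calc ∑ p ∈ C, (∑ i, f i) p = ∑ i, ∑ p ∈ C, f i p := by
            simp only [Finset.sum_apply]; rw [Finset.sum_comm]
        _ ≤ ∑ _i : Fin r, (1:ℝ) := Finset.sum_le_sum fun i _ => (hf i).1.2 C hC
        _ = r := by simp
    · intro p
      rw [Finset.sum_apply]
      refine ⟨∑ i, Classical.choose ((hf i).2 p), ?_⟩
      push_cast
      exact Finset.sum_congr rfl fun i _ => Classical.choose_spec ((hf i).2 p)
end

section
/- For any finite poset P and r ≥ 1, every lattice point of the dilated order polytope O(P,r) is a sum of r lattice points of O(P,1); that is, lattice points of order polytopes satisfy the integer decomposition property. -/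
/-- integer decomposition property for order polytopes: every lattice
point of `O(P,r)` is a sum of `r` lattice points of `O(P,1)`. -/
theorem order_polytope_IDP (P : Type*) [PartialOrder P] [Fintype P]
    (r : ℕ) (hr : 1 ≤ r) (x : P → ℝ)
    (hx : x ∈ orderPolytope P (r : ℝ)) (hxl : isLatticePoint x) :
    ∃ f : Fin r → (P → ℝ),
      (∀ i, f i ∈ orderPolytope P 1 ∧ isLatticePoint (f i)) ∧ x = ∑ i, f i := by
  classical
  choose n hn using hxl
  refine ⟨fun i p => if (i : ℤ) < n p then 1 else 0, ?_, ?_⟩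
  · intro i
    refine ⟨⟨fun p => ?_, fun p q hpq => ?_⟩, fun p => ?_⟩ <;> dsimp only
    · constructor <;> split <;> norm_num
    · have h1 : x p ≤ x q := hx.2 p q hpq
      rw [hn p, hn q] at h1
      have h2 : n p ≤ n q := by exact_mod_cast h1
      by_cases h : (i : ℤ) < n p
      · rw [if_pos h, if_pos (lt_of_lt_of_le h h2)]
      · rw [if_neg h]; split <;> norm_num
    · by_cases h : (i : ℤ) < n p
      · exact ⟨1, by rw [if_pos h]; norm_num⟩
      · exact ⟨0, by rw [if_neg h]; norm_num⟩
  · funext p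
    have h0 : (0 : ℝ) ≤ x p := (hx.1 p).1
    have h1 : x p ≤ (r : ℝ) := (hx.1 p).2
    rw [hn p] at h0 h1
    have hn0 : (0 : ℤ) ≤ n p := by exact_mod_cast h0
    have hnr : n p ≤ (r : ℤ) := by exact_mod_cast h1
    set m := (n p).toNat with hm
    have hmn : (m : ℤ) = n p := Int.toNat_of_nonneg hn0
    have hmr : m ≤ r := by omega
    have hsum : (∑ i : Fin r, fun q => if (i : ℤ) < n q then (1:ℝ) else 0) p
        = ∑ i : Fin r, (if (i : ℤ) < n p then (1:ℝ) else 0) := by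
      simp [Finset.sum_apply]
    rw [hsum, Fin.sum_univ_eq_sum_range (fun i => if (i : ℤ) < n p then (1:ℝ) else 0) r]
    have hfilt : (Finset.range r).filter (fun i : ℕ => ((i : ℤ) < n p)) = Finset.range m := by
      ext i
      simp only [Finset.mem_filter, Finset.mem_range]
      omega
    rw [← Finset.sum_filter, hfilt]
    simp [hn p, ← hmn]
end

section
/- For any finite poset P and r ≥ 1, every lattice point of the dilated chain polytope C(P,r) is a sum of r lattice points of C(P,1); that is, chain polytopes satisfy the integer decomposition property. -/
/-!
Write `x = n` with `n : P → ℕ` and let `g p = maxChainSumBelow n p` be the largest weight `∑ n`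
of a chain below `p`. Then `n p ≤ g p ≤ r`, and `g p + n q ≤ g q` whenever `p < q`. Hence the
integer intervals `[g p - n p, g p)` lie in `[0, r)`, the interval of `p` has `n p` elements, and
intervals of comparable elements are disjoint. For each `i < r` the elements whose interval
contains `i` therefore form an antichain `Aᵢ = chainSumLayer n i`, and `x = ∑ᵢ χ(Aᵢ)`.
-/

open Finset

theorem isLatticePoint_chi {P : Type*} [DecidableEq P] (A : Finset P) :
    isLatticePoint (chi A) := fun p => by
  by_cases hp : p ∈ A
  · exact ⟨1, by simp [chi, hp]⟩
  · exact ⟨0, by simp [chi, hp]⟩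

section ChainPolytope

variable {P : Type*} [PartialOrder P]

theorem chi_mem_chainPolytope_one [DecidableEq P] {A : Finset P}
    (hA : IsAntichain (· ≤ ·) (A : Set P)) : chi A ∈ chainPolytope P 1 := by
  refine ⟨fun p => by unfold chi; split_ifs <;> norm_num, fun C hC => ?_⟩
  have hcard : #(C ∩ A) ≤ 1 := by
    rw [card_le_one_iff_subsingleton, coe_inter]
    exact inter_subsingleton_of_isChain_of_isAntichain hC hA
  simpa only [chi, sum_boole, filter_mem_eq_inter, Nat.cast_le_one] using hcard

theorem exists_nat_eq_of_mem_chainPolytope {r : ℕ} {x : P → ℝ} (hx : x ∈ chainPolytope P r)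
    (hxl : isLatticePoint x) :
    ∃ n : P → ℕ, x = (fun p => (n p : ℝ)) ∧
      ∀ C : Finset P, IsChain (· ≤ ·) (C : Set P) → ∑ p ∈ C, n p ≤ r := by
  choose m hm using hxl
  have hx_eq : x = fun p => ((m p).toNat : ℝ) := funext fun p => by
    have hmp : 0 ≤ m p := by exact_mod_cast hm p ▸ hx.1 p
    rw [hm p]
    exact_mod_cast (Int.toNat_of_nonneg hmp).symm
  refine ⟨fun p => (m p).toNat, hx_eq, fun C hC => ?_⟩
  have hsum : ∑ p ∈ C, ((m p).toNat : ℝ) ≤ r := by simpa only [hx_eq] using hx.2 C hC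
  exact_mod_cast hsum

end ChainPolytope

section MaxChainSum

variable {P : Type*} [PartialOrder P] [Fintype P] (n : P → ℕ)

open Classical in
noncomputable def chainsBelow (p : P) : Finset (Finset P) :=
  univ.filter fun C => IsChain (· ≤ ·) (C : Set P) ∧ ∀ q ∈ C, q ≤ p

theorem mem_chainsBelow {p : P} {C : Finset P} :
    C ∈ chainsBelow p ↔ IsChain (· ≤ ·) (C : Set P) ∧ ∀ q ∈ C, q ≤ p := by
  classical
  simp [chainsBelow]

noncomputable def maxChainSumBelow (p : P) : ℕ :=
  (chainsBelow p).sup fun C => ∑ q ∈ C, n q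

noncomputable def chainSumLayer (i : ℕ) : Finset P :=
  univ.filter fun p => i ∈ Ico (maxChainSumBelow n p - n p) (maxChainSumBelow n p)

variable {n}

theorem maxChainSumBelow_le {r : ℕ}
    (hn : ∀ C : Finset P, IsChain (· ≤ ·) (C : Set P) → ∑ q ∈ C, n q ≤ r) (p : P) :
    maxChainSumBelow n p ≤ r :=
  Finset.sup_le fun C hC => hn C (mem_chainsBelow.1 hC).1

theorem le_maxChainSumBelow_of_isChain {p : P} {C : Finset P} (hC : IsChain (· ≤ ·) (C : Set P))
    (hCp : ∀ q ∈ C, q ≤ p) : ∑ q ∈ C, n q ≤ maxChainSumBelow n p :=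
  le_sup (f := fun C => ∑ q ∈ C, n q) (mem_chainsBelow.2 ⟨hC, hCp⟩)

theorem le_maxChainSumBelow (p : P) : n p ≤ maxChainSumBelow n p := by
  simpa using le_maxChainSumBelow_of_isChain (n := n) (C := {p}) (by simp) (by simp)

theorem maxChainSumBelow_add_le {p q : P} (hpq : p < q) :
    maxChainSumBelow n p + n q ≤ maxChainSumBelow n q := by
  classical
  obtain ⟨C, hC, hCeq⟩ := exists_mem_eq_sup _ ⟨∅, mem_chainsBelow.2 ⟨by simp, by simp⟩⟩
    fun C : Finset P => ∑ s ∈ C, n s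
  obtain ⟨hchain, hCp⟩ := mem_chainsBelow.1 hC
  have hCq : ∀ s ∈ C, s < q := fun s hs => (hCp s hs).trans_lt hpq
  have hqC : q ∉ C := fun hq => lt_irrefl q (hCq q hq)
  have hins := le_maxChainSumBelow_of_isChain (n := n) (C := insert q C)
    (by rw [coe_insert]; exact hchain.insert fun s hs _ => Or.inr (hCq s hs).le)
    (by simpa only [forall_mem_insert] using ⟨le_rfl, fun s hs => (hCq s hs).le⟩)
  rw [sum_insert hqC] at hins
  rw [maxChainSumBelow, hCeq]
  omega

variable (n) in
theorem isAntichain_chainSumLayer (i : ℕ) : IsAntichain (· ≤ ·) (chainSumLayer n i : Set P) := by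
  intro p hp q hq hne hle
  have hlt := maxChainSumBelow_add_le (n := n) (lt_of_le_of_ne hle hne)
  have hq_le := le_maxChainSumBelow (n := n) q
  simp only [chainSumLayer, coe_filter, mem_univ, true_and, Set.mem_ofPred_eq, mem_Ico] at hp hq
  omega

theorem card_filter_mem_chainSumLayer [DecidableEq P] {r : ℕ}
    (hn : ∀ C : Finset P, IsChain (· ≤ ·) (C : Set P) → ∑ q ∈ C, n q ≤ r) (p : P) :
    #((range r).filter fun i => p ∈ chainSumLayer n i) = n p := by
  have hle := maxChainSumBelow_le hn p
  have hge := le_maxChainSumBelow (n := n) p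
  have hfilter : (range r).filter (fun i => p ∈ chainSumLayer n i)
      = Ico (maxChainSumBelow n p - n p) (maxChainSumBelow n p) := by
    ext i
    simp only [chainSumLayer, mem_filter, mem_range, mem_univ, true_and, mem_Ico]
    omega
  rw [hfilter, Nat.card_Ico]
  omega

end MaxChainSum

theorem chain_polytope_IDP_general (P : Type*) [PartialOrder P] [Fintype P]
    (r : ℕ) (x : P → ℝ)
    (hx : x ∈ chainPolytope P (r : ℝ)) (hxl : isLatticePoint x) :
    ∃ f : Fin r → (P → ℝ),
      (∀ i, f i ∈ chainPolytope P 1 ∧ isLatticePoint (f i)) ∧ x = ∑ i, f i := by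
  classical
  obtain ⟨n, rfl, hn⟩ := exists_nat_eq_of_mem_chainPolytope hx hxl
  refine ⟨fun i => chi (chainSumLayer n i), fun i =>
    ⟨chi_mem_chainPolytope_one (isAntichain_chainSumLayer n i), isLatticePoint_chi _⟩, ?_⟩
  funext p
  rw [Finset.sum_apply, Fin.sum_univ_eq_sum_range (fun i => chi (chainSumLayer n i) p)]
  simp only [chi, sum_boole]
  rw [card_filter_mem_chainSumLayer hn p]

/-- integer decomposition property for chain polytopes: every lattice
point of `C(P,r)` is a sum of `r` lattice points of `C(P,1)`. -/
theorem chain_polytope_IDP (P : Type*) [PartialOrder P] [Fintype P]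
    (r : ℕ) (hr : 1 ≤ r) (x : P → ℝ)
    (hx : x ∈ chainPolytope P (r : ℝ)) (hxl : isLatticePoint x) :
    ∃ f : Fin r → (P → ℝ),
      (∀ i, f i ∈ chainPolytope P 1 ∧ isLatticePoint (f i)) ∧ x = ∑ i, f i :=
  chain_polytope_IDP_general P r x hx hxl
end
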